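/- arXiv:2309.08490 — 2 statements merged into one kernel-verified Lean document; each statement's English description precedes it below -/
import Mathlib

section
/- Let A, B, C > 0 be real numbers and m ≥ 2 an integer. Then ∫₀^∞ (A + (Ba - C a^{-1})²)^{-m} a^{-2} da ≤ K · A^{-(m - 1/2)} C^{-1} for an absolute constant K independent of A, B, C, m. -/
open MeasureTheory Real Set

lemma key_eq {A : ℝ} (hA : 0 < A) :
    (fun x : ℝ => (A + x ^ 2)⁻¹)
      = fun x => A⁻¹ * (1 + ((Real.sqrt A)⁻¹ * x) ^ 2)⁻¹ := by
  funext x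
  have hs : Real.sqrt A ^ 2 = A := Real.sq_sqrt hA.le
  have hs0 : Real.sqrt A ≠ 0 := (Real.sqrt_pos.2 hA).ne'
  rw [← hs]
  have h1 : (0:ℝ) < Real.sqrt A ^ 2 + x ^ 2 := by positivity
  field_simp
  rw [Real.sqrt_sq (Real.sqrt_nonneg A)]
  ring

lemma integrable_inv_add_sq {A : ℝ} (hA : 0 < A) :
    Integrable (fun x : ℝ => (A + x ^ 2)⁻¹) := by
  have hs0 : Real.sqrt A ≠ 0 := (Real.sqrt_pos.2 hA).ne'
  rw [key_eq hA]
  have h := (integrable_inv_one_add_sq.comp_div hs0).const_mul A⁻¹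
  refine h.congr (Filter.Eventually.of_forall fun x => ?_)
  simp [div_eq_inv_mul]

lemma integral_inv_add_sq {A : ℝ} (hA : 0 < A) :
    ∫ x : ℝ, (A + x ^ 2)⁻¹ = π / Real.sqrt A := by
  have hs : 0 < Real.sqrt A := Real.sqrt_pos.2 hA
  rw [key_eq hA, MeasureTheory.integral_const_mul,
    MeasureTheory.Measure.integral_comp_inv_mul_left (fun y : ℝ => (1 + y ^ 2)⁻¹) (Real.sqrt A),
    integral_univ_inv_one_add_sq, smul_eq_mul, abs_of_pos hs]
  have hA' : Real.sqrt A * Real.sqrt A = A := Real.mul_self_sqrt hA.le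
  field_simp
  nlinarith [hA', Real.pi_pos]

/-- For reals `A, B, C > 0` and an integer `m ≥ 2`,
`∫₀^∞ (A + (Ba - C/a)²)^{-m} a^{-2} da ≤ K · A^{-(m-1/2)} / C` for an absolute constant `K`. -/
theorem integral_bound_first :
    ∃ K : ℝ, 0 < K ∧ ∀ (A B C : ℝ) (m : ℕ), 0 < A → 0 < B → 0 < C → 2 ≤ m →
      (∫ a in Set.Ioi (0:ℝ), ((A + (B*a - C*a⁻¹)^2)^m * a^2)⁻¹)
        ≤ K / (A ^ ((m:ℝ) - 1/2) * C) := by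
  refine ⟨π, Real.pi_pos, ?_⟩
  intro A B C m hA hB hC hm
  set g : ℝ → ℝ := fun a => C * a⁻¹ - B * a with hgdef
  set g' : ℝ → ℝ := fun a => -(C * (a ^ 2)⁻¹ + B) with hg'def
  have hmeas : MeasurableSet (Ioi (0:ℝ)) := measurableSet_Ioi
  -- derivative
  have hderiv : ∀ a ∈ Ioi (0:ℝ), HasDerivWithinAt g (g' a) (Ioi 0) a := by
    intro a ha
    have ha0 : a ≠ 0 := (mem_Ioi.1 ha).ne'
    have h1 : HasDerivAt g (C * (-(a ^ 2)⁻¹) - B * 1) a :=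
      ((hasDerivAt_inv ha0).const_mul C).sub ((hasDerivAt_id a).const_mul B)
    have h2 : C * (-(a ^ 2)⁻¹) - B * 1 = g' a := by simp [hg'def]; ring
    exact (h2 ▸ h1).hasDerivWithinAt
  -- injectivity
  have hinj : InjOn g (Ioi 0) := by
    refine (StrictAntiOn.injOn ?_)
    intro x hx y hy hxy
    have hx0 : (0:ℝ) < x := hx
    have hy0 : (0:ℝ) < y := hy
    simp only [hgdef]
    have h1 : x * x⁻¹ = 1 := mul_inv_cancel₀ hx0.ne'
    have h2 : y * y⁻¹ = 1 := mul_inv_cancel₀ hy0.ne'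
    have h3 : (0:ℝ) < x⁻¹ := inv_pos.2 hx0
    have h4 : (0:ℝ) < y⁻¹ := inv_pos.2 hy0
    have h5 : y⁻¹ < x⁻¹ := by nlinarith [mul_pos h3 h4]
    nlinarith [mul_lt_mul_of_pos_left h5 hC, mul_lt_mul_of_pos_left hxy hB]
  -- surjectivity
  have himage : g '' Ioi 0 = univ := by
    refine Set.eq_univ_of_forall fun y => ?_
    set s := Real.sqrt (y ^ 2 + 4 * B * C) with hs
    have hssq : s ^ 2 = y ^ 2 + 4 * B * C := Real.sq_sqrt (by positivity)
    have hys : y < s := by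
      calc y ≤ |y| := le_abs_self y
        _ = Real.sqrt (y ^ 2) := (Real.sqrt_sq_eq_abs y).symm
        _ < s := Real.sqrt_lt_sqrt (by positivity) (by nlinarith)
    have h2B : (2 * B) ≠ 0 := by positivity
    have ha0 : 0 < (s - y) / (2 * B) := div_pos (by linarith) (by linarith)
    refine ⟨(s - y) / (2 * B), ha0, ?_⟩
    simp only [hgdef]
    have h4 : (s - y) * (s + y) = 4 * B * C := by linear_combination hssq
    have hsy : s - y ≠ 0 := by linarith
    rw [inv_div]
    field_simp
    linear_combination (-1 : ℝ) * hssq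
  -- substitution
  have hφint : Integrable (fun x : ℝ => (A + x ^ 2)⁻¹) := integrable_inv_add_sq hA
  have hsub := integral_image_eq_integral_abs_deriv_smul hmeas hderiv hinj
      (fun x => (A + x ^ 2)⁻¹)
  rw [himage, MeasureTheory.setIntegral_univ, integral_inv_add_sq hA] at hsub
  have hmaj_int : IntegrableOn (fun a => |g' a| • (A + (g a) ^ 2)⁻¹) (Ioi 0) := by
    refine (integrableOn_image_iff_integrableOn_abs_deriv_smul hmeas hderiv hinj
      (fun x => (A + x ^ 2)⁻¹)).1 ?_
    rw [himage]
    exact hφint.integrableOn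
  -- pointwise bound
  set K0 : ℝ := (A ^ (m - 1) * C)⁻¹ with hK0
  have hK0pos : 0 < K0 := by positivity
  have hpt : ∀ a ∈ Ioi (0:ℝ),
      ((A + (B*a - C*a⁻¹)^2)^m * a^2)⁻¹ ≤ K0 * (|g' a| * (A + (g a) ^ 2)⁻¹) := by
    intro a ha
    have ha0 : (0:ℝ) < a := ha
    have hgsq : (B*a - C*a⁻¹)^2 = (g a)^2 := by simp only [hgdef]; ring
    rw [hgsq]
    set t := (g a) ^ 2 with ht
    have ht0 : 0 ≤ t := sq_nonneg _
    have hAt : 0 < A + t := by positivity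
    have habs : |g' a| = C * (a ^ 2)⁻¹ + B := by
      simp only [hg'def, abs_neg]
      exact abs_of_pos (by positivity)
    rw [habs]
    have hpow : A ^ (m - 1) * (A + t) ≤ (A + t) ^ m := by
      calc A ^ (m - 1) * (A + t) ≤ (A + t) ^ (m - 1) * (A + t) := by
            gcongr <;> linarith
        _ = (A + t) ^ m := by
            rw [← pow_succ]
            congr 1
            omega
    have hstep1 : ((A + t) ^ m * a ^ 2)⁻¹ ≤ (A ^ (m - 1) * (A + t) * a ^ 2)⁻¹ := by
      apply inv_anti₀ (by positivity)
      exact mul_le_mul_of_nonneg_right hpow (sq_nonneg a)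
    refine hstep1.trans ?_
    have hrw : (A ^ (m - 1) * (A + t) * a ^ 2)⁻¹
        = K0 * (C * (a ^ 2)⁻¹ * (A + t)⁻¹) := by
      rw [hK0]
      field_simp
    rw [hrw]
    gcongr
    nlinarith [inv_pos.2 hAt, inv_pos.2 (pow_pos ha0 2), mul_pos (inv_pos.2 (pow_pos ha0 2)) (inv_pos.2 hAt)]
  -- integral comparison
  have hmono : (∫ a in Set.Ioi (0:ℝ), ((A + (B*a - C*a⁻¹)^2)^m * a^2)⁻¹)
      ≤ ∫ a in Set.Ioi (0:ℝ), K0 * (|g' a| * (A + (g a) ^ 2)⁻¹) := by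
    refine integral_mono_of_nonneg ?_ ?_ ?_
    · exact Filter.Eventually.of_forall fun a => by positivity
    · simpa [smul_eq_mul] using (hmaj_int.const_mul K0)
    · exact (ae_restrict_iff' hmeas).2 (Filter.Eventually.of_forall hpt)
  have hval : (∫ a in Set.Ioi (0:ℝ), K0 * (|g' a| * (A + (g a) ^ 2)⁻¹))
      = K0 * (π / Real.sqrt A) := by
    rw [MeasureTheory.integral_const_mul]
    congr 1
    simp_rw [← smul_eq_mul]
    exact hsub.symm
  -- final arithmetic
  have hfin : K0 * (π / Real.sqrt A) = π / (A ^ ((m:ℝ) - 1/2) * C) := by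
    have hrpow : A ^ ((m:ℝ) - 1/2) = A ^ (m - 1) * Real.sqrt A := by
      have h1 : ((m:ℝ) - 1/2) = ((m - 1 : ℕ) : ℝ) + 1/2 := by
        have : ((m - 1 : ℕ) : ℝ) = (m : ℝ) - 1 := by
          have : (1:ℕ) ≤ m := by omega
          push_cast [Nat.cast_sub this]
          ring
        rw [this]; ring
      rw [h1, Real.rpow_add hA, Real.rpow_natCast, ← Real.rpow_natCast A (m-1)]
      congr 1
      rw [Real.sqrt_eq_rpow]
    rw [hrpow, hK0]
    have hs : 0 < Real.sqrt A := Real.sqrt_pos.2 hA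
    rw [div_eq_mul_inv, div_eq_mul_inv, mul_inv, mul_inv, mul_inv]
    ring
  calc _ ≤ _ := hmono
    _ = K0 * (π / Real.sqrt A) := hval
    _ = π / (A ^ ((m:ℝ) - 1/2) * C) := hfin
end

section
/- Let A, B, C > 0 be real numbers and m ≥ 2 an integer. Then ∫₀^∞ (A + (Ba + C a^{-1})²)^{-m} a^{-2} da ≤ K · (A + 2BC)^{-(m - 1/2)} C^{-1} for an absolute constant K independent of A, B, C, m. -/
open MeasureTheory Real Set

lemma aux_rewrite {d c : ℝ} (hd : 0 < d) (hc : 0 < c) (a : ℝ) :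
    (d * a ^ 2 + c ^ 2)⁻¹ = (c ^ 2)⁻¹ * (1 + (Real.sqrt d / c * a) ^ 2)⁻¹ := by
  have h : (1 + (Real.sqrt d / c * a) ^ 2) = (d * a ^ 2 + c ^ 2) / c ^ 2 := by
    rw [mul_pow, div_pow, Real.sq_sqrt hd.le]
    field_simp
    ring
  rw [h]
  have hden : 0 < d * a ^ 2 + c ^ 2 := by positivity
  field_simp

lemma aux_integrable {d c : ℝ} (hd : 0 < d) (hc : 0 < c) :
    IntegrableOn (fun a => (d * a ^ 2 + c ^ 2)⁻¹) (Set.Ioi (0:ℝ)) := by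
  have hb : 0 < Real.sqrt d / c := div_pos (Real.sqrt_pos.2 hd) hc
  have h1 : IntegrableOn (fun x : ℝ => (1 + x ^ 2)⁻¹) (Set.Ioi (Real.sqrt d / c * 0)) :=
    integrable_inv_one_add_sq.integrableOn
  have h2 := (integrableOn_Ioi_comp_mul_left_iff (fun x : ℝ => (1 + x ^ 2)⁻¹) 0 hb).2 h1
  have h3 : IntegrableOn (fun a : ℝ => (c ^ 2)⁻¹ * (1 + (Real.sqrt d / c * a) ^ 2)⁻¹)
      (Set.Ioi (0:ℝ)) := h2.const_mul _
  exact h3.congr_fun (fun a _ => (aux_rewrite hd hc a).symm) measurableSet_Ioi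

lemma aux_integral {d c : ℝ} (hd : 0 < d) (hc : 0 < c) :
    ∫ a in Set.Ioi (0:ℝ), (d * a ^ 2 + c ^ 2)⁻¹ = π / (2 * (Real.sqrt d * c)) := by
  have hb : 0 < Real.sqrt d / c := div_pos (Real.sqrt_pos.2 hd) hc
  simp_rw [aux_rewrite hd hc]
  rw [integral_const_mul _ _, integral_comp_mul_left_Ioi (fun x => (1 + x ^ 2)⁻¹) 0 hb,
    mul_zero, integral_Ioi_inv_one_add_sq, Real.arctan_zero, sub_zero, smul_eq_mul]
  have hs : 0 < Real.sqrt d := Real.sqrt_pos.2 hd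
  field_simp

/-- For reals `A, B, C > 0` and an integer `m ≥ 2`,
`∫₀^∞ (A + (Ba + C/a)²)^{-m} a^{-2} da ≤ K · (A + 2BC)^{-(m-1/2)} / C`
for an absolute constant `K`. -/
theorem integral_bound_second :
    ∃ K : ℝ, 0 < K ∧ ∀ (A B C : ℝ) (m : ℕ), 0 < A → 0 < B → 0 < C → 2 ≤ m →
      (∫ a in Set.Ioi (0:ℝ), ((A + (B*a + C*a⁻¹)^2)^m * a^2)⁻¹)
        ≤ K / ((A + 2*B*C) ^ ((m:ℝ) - 1/2) * C) := by
  refine ⟨π / 2, by positivity, fun A B C m hA hB hC hm => ?_⟩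
  set D : ℝ := A + 2 * B * C with hDdef
  have hD : 0 < D := by positivity
  have hsD : 0 < Real.sqrt D := Real.sqrt_pos.2 hD
  -- the dominating function
  set g : ℝ → ℝ := fun a => (D ^ (m - 1))⁻¹ * (D * a ^ 2 + C ^ 2)⁻¹ with hg
  have hgint : IntegrableOn g (Set.Ioi (0:ℝ)) := (aux_integrable hD hC).const_mul _
  have hmono : ∫ a in Set.Ioi (0:ℝ), ((A + (B*a + C*a⁻¹)^2)^m * a^2)⁻¹
      ≤ ∫ a in Set.Ioi (0:ℝ), g a := by
    refine integral_mono_of_nonneg ?_ hgint ?_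
    · filter_upwards with a
      positivity
    · rw [Filter.EventuallyLE, ae_restrict_iff' measurableSet_Ioi]
      filter_upwards with a ha
      have ha0 : (0:ℝ) < a := ha
      have hX : D + C ^ 2 * (a⁻¹) ^ 2 ≤ A + (B * a + C * a⁻¹) ^ 2 := by
        have : A + (B * a + C * a⁻¹) ^ 2
            = D + C ^ 2 * (a⁻¹) ^ 2 + (B * a) ^ 2 + (2 * B * C * (a * a⁻¹) - 2 * B * C) := by
          ring
        rw [this, mul_inv_cancel₀ ha0.ne']
        nlinarith [sq_nonneg (B * a)]
      have hXpos : 0 < D + C ^ 2 * (a⁻¹) ^ 2 := by positivity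
      have hDX : D ≤ A + (B * a + C * a⁻¹) ^ 2 := le_trans (by nlinarith [sq_nonneg (C * a⁻¹)]) hX
      have hkey : D ^ (m - 1) * (D * a ^ 2 + C ^ 2) ≤ (A + (B * a + C * a⁻¹) ^ 2) ^ m * a ^ 2 := by
        have h1 : (A + (B * a + C * a⁻¹) ^ 2) ^ m
            = (A + (B * a + C * a⁻¹) ^ 2) ^ (m - 1) * (A + (B * a + C * a⁻¹) ^ 2) := by
          rw [← pow_succ, Nat.sub_add_cancel (by omega)]
        have h2 : D ^ (m - 1) ≤ (A + (B * a + C * a⁻¹) ^ 2) ^ (m - 1) :=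
          pow_le_pow_left₀ hD.le hDX _
        have h3 : (D + C ^ 2 * (a⁻¹) ^ 2) * a ^ 2 = D * a ^ 2 + C ^ 2 := by
          field_simp
        calc D ^ (m - 1) * (D * a ^ 2 + C ^ 2)
            = D ^ (m - 1) * ((D + C ^ 2 * (a⁻¹) ^ 2) * a ^ 2) := by rw [h3]
          _ ≤ (A + (B * a + C * a⁻¹) ^ 2) ^ (m - 1)
              * ((A + (B * a + C * a⁻¹) ^ 2) * a ^ 2) := by
              exact mul_le_mul h2 (mul_le_mul_of_nonneg_right hX (by positivity))
                (by positivity) (by positivity)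
          _ = (A + (B * a + C * a⁻¹) ^ 2) ^ m * a ^ 2 := by rw [h1]; ring
      show ((A + (B*a + C*a⁻¹)^2)^m * a^2)⁻¹ ≤ (D ^ (m - 1))⁻¹ * (D * a ^ 2 + C ^ 2)⁻¹
      rw [← mul_inv]
      exact inv_anti₀ (by positivity) hkey
  have hval : ∫ a in Set.Ioi (0:ℝ), g a
      = (D ^ (m - 1))⁻¹ * (π / (2 * (Real.sqrt D * C))) := by
    rw [hg, integral_const_mul _ _, aux_integral hD hC]
  have hrw : (D ^ (m - 1))⁻¹ * (π / (2 * (Real.sqrt D * C)))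
      = (π / 2) / (D ^ ((m:ℝ) - 1/2) * C) := by
    have h1 : D ^ ((m:ℝ) - 1/2) = D ^ (m - 1) * Real.sqrt D := by
      rw [Real.sqrt_eq_rpow, ← Real.rpow_natCast D (m - 1), ← Real.rpow_add hD]
      congr 1
      have : ((m - 1 : ℕ) : ℝ) = (m : ℝ) - 1 := by
        rw [Nat.cast_sub (by omega)]; norm_num
      rw [this]; ring
    have hp : (0:ℝ) < D ^ (m - 1) := by positivity
    rw [h1, eq_div_iff (by positivity : D ^ (m - 1) * Real.sqrt D * C ≠ 0)]
    field_simp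
  calc (∫ a in Set.Ioi (0:ℝ), ((A + (B*a + C*a⁻¹)^2)^m * a^2)⁻¹)
      ≤ ∫ a in Set.Ioi (0:ℝ), g a := hmono
    _ = (π / 2) / (D ^ ((m:ℝ) - 1/2) * C) := by rw [hval, hrw]
end
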